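/- Let (Ω, ℱ₂, P) be a probability space with sub-σ-algebras ℱ₁ ⊆ ℱ₂, and suppose ℱ₂ is atomless conditionally to ℱ₁. There is an absolute constant C ≥ 1 (independent of the data) such that for any two integrable ℱ₁-measurable random variables f, g : Ω → ℝ there exist commonotone ℱ₂-measurable random variables ξ, η with E[ξ ∣ ℱ₁] = f a.s., E[η ∣ ℱ₁] = g a.s., and moreover the Euclidean norm bound ‖(ξ(ω), η(ω))‖ ≤ C · max(‖(f(ω), g(ω))‖, 1) holds for almost every ω. -/

import Mathlib

open MeasureTheory ProbabilityTheory

/-- The conditional expectation of the indicator of a set, as a real-valued function. -/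
noncomputable def condIndicator {Ω : Type*} (m1 : MeasurableSpace Ω) [MeasurableSpace Ω]
    (μ : Measure Ω) (A : Set Ω) : Ω → ℝ :=
  μ[A.indicator (fun _ => (1 : ℝ)) | m1]

/-- The ambient σ-algebra is atomless conditionally to `m1`: for every measurable set `A`
there is a measurable `B ⊆ A` with `0 < E[1_B ∣ m1] < E[1_A ∣ m1]` a.s. on
`{E[1_A ∣ m1] > 0}`. -/
def CondAtomless {Ω : Type*} (m1 : MeasurableSpace Ω) [MeasurableSpace Ω]
    (μ : Measure Ω) : Prop :=
  ∀ A : Set Ω, MeasurableSet A →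
    ∃ B : Set Ω, MeasurableSet B ∧ B ⊆ A ∧
      ∀ᵐ ω ∂μ, 0 < condIndicator m1 μ A ω →
        0 < condIndicator m1 μ B ω ∧ condIndicator m1 μ B ω < condIndicator m1 μ A ω

/-- Two real random variables are commonotone if both are a.s. equal to nondecreasing
functions of a common random variable. -/
def Commonotone {Ω : Type*} [MeasurableSpace Ω] (μ : Measure Ω) (ξ η : Ω → ℝ) : Prop :=
  ∃ (f g : ℝ → ℝ) (ζ : Ω → ℝ), Monotone f ∧ Monotone g ∧ Measurable ζ ∧
    ξ =ᵐ[μ] (fun ω => f (ζ ω)) ∧ η =ᵐ[μ] (fun ω => g (ζ ω))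

/-- The Euclidean norm on `ℝ²`. -/
noncomputable def euclNorm (p : ℝ × ℝ) : ℝ := Real.sqrt (p.1 ^ 2 + p.2 ^ 2)

/-!
The curve `s ↦ (curveX s, curveY s)` is an odd staircase with nondecreasing coordinates whose
steps grow by a factor `4`. Hence every `(x, y)` is the average of four of its points, with
parameters of size `O(max ‖(x, y)‖ 1)`: the two points on the vertical segments `x = ± a`
contribute `(0, 4 y)` and the two on the horizontal segments `y = ± 4 a` contribute `(4 x, 0)`.

Conditional atomlessness splits `Ω` into four cells of conditional probability `1/4` each.
Exact splitting is an exhaustion argument: a set `M ⊆ A` maximal up to null sets among those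
with `E[1_M ∣ m1] ≤ h` must satisfy equality, since otherwise iterated halving yields a non-null
set that can still be added. Taking `ζ` to be the parameter of the point attached to the cell
of `ω`, the variables `curveX ∘ ζ`, `curveY ∘ ζ` are commonotone, and their conditional
expectations given `m1` are the averages over the four points.
-/

open Filter Topology Set

lemma euclNorm_le_abs_add_abs (a b : ℝ) : euclNorm (a, b) ≤ |a| + |b| :=
  Real.sqrt_le_iff.mpr
    ⟨by positivity, by nlinarith [sq_abs a, sq_abs b, abs_nonneg a, abs_nonneg b]⟩

lemma abs_fst_le_euclNorm (a b : ℝ) : |a| ≤ euclNorm (a, b) := by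
  rw [euclNorm, ← Real.sqrt_sq_eq_abs]
  exact Real.sqrt_le_sqrt (by nlinarith [sq_nonneg b])

lemma abs_snd_le_euclNorm (a b : ℝ) : |b| ≤ euclNorm (a, b) := by
  rw [euclNorm, ← Real.sqrt_sq_eq_abs]
  exact Real.sqrt_le_sqrt (by nlinarith [sq_nonneg a])

noncomputable def pow4Floor (t : ℝ) : ℝ := 4 ^ Nat.log 4 ⌊t⌋₊

lemma one_le_pow4Floor (t : ℝ) : 1 ≤ pow4Floor t := one_le_pow₀ (by norm_num)

lemma lt_four_mul_pow4Floor (t : ℝ) : t < 4 * pow4Floor t := by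
  have h : ⌊t⌋₊ < 4 ^ (Nat.log 4 ⌊t⌋₊ + 1) := Nat.lt_pow_succ_log_self (by norm_num) _
  calc t < ⌊t⌋₊ + 1 := Nat.lt_floor_add_one t
    _ ≤ (4 : ℝ) ^ (Nat.log 4 ⌊t⌋₊ + 1) := by exact_mod_cast h
    _ = 4 * pow4Floor t := pow_succ' _ _

lemma pow4Floor_le_max (t : ℝ) : pow4Floor t ≤ max t 1 := by
  rcases le_or_gt 1 t with ht | ht
  · have h : 4 ^ Nat.log 4 ⌊t⌋₊ ≤ ⌊t⌋₊ := Nat.pow_log_le_self 4 (Nat.floor_pos.mpr ht).ne'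
    calc pow4Floor t ≤ ⌊t⌋₊ := by rw [pow4Floor]; exact_mod_cast h
      _ ≤ t := Nat.floor_le (by linarith)
      _ ≤ max t 1 := le_max_left _ _
  · simp [pow4Floor, Nat.floor_eq_zero.mpr ht]

lemma monotone_pow4Floor : Monotone pow4Floor := fun _ _ hab =>
  pow_le_pow_right₀ (by norm_num) (Nat.log_mono_right (Nat.floor_le_floor hab))

lemma four_mul_pow4Floor_le {s t : ℝ} (h : pow4Floor s < pow4Floor t) :
    4 * pow4Floor s ≤ pow4Floor t := by
  unfold pow4Floor at *
  rw [← pow_succ']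
  exact pow_le_pow_right₀ (by norm_num) ((pow_lt_pow_iff_right₀ (by norm_num)).mp h)

lemma pow4Floor_pow_add (k : ℕ) {c : ℝ} (hc0 : 0 ≤ c) (hc : c < 3 * 4 ^ k) :
    pow4Floor (4 ^ k + c) = 4 ^ k := by
  unfold pow4Floor
  congr 1
  apply Nat.log_eq_of_pow_le_of_lt_pow
  · exact Nat.le_floor (by push_cast; linarith)
  · rw [Nat.floor_lt (by positivity)]
    push_cast
    rw [pow_succ]
    linarith

/-- For `s ≥ 0`, `s ↦ (stairFst s, stairSnd s)` runs along the diagonal up to `(1, 1)` and then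
up the staircase `(4^k, 4^k) → (4^k, 4^(k+1)) → (4^(k+1), 4^(k+1))`, with `s` the `ℓ¹`-length. -/
noncomputable def stairFst (s : ℝ) : ℝ :=
  min (s / 2) (max (pow4Floor (s / 2)) (s - 4 * pow4Floor (s / 2)))

noncomputable def stairSnd (s : ℝ) : ℝ := s - stairFst s

lemma stairSnd_eq (s : ℝ) :
    stairSnd s = max (s / 2) (min (s - pow4Floor (s / 2)) (4 * pow4Floor (s / 2))) := by
  rw [stairSnd, stairFst, ← max_sub_sub_left, ← min_sub_sub_left]
  congr 2 <;> ring

lemma monotone_stairFst : Monotone stairFst := by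
  intro a b hab
  refine min_le_min (by linarith) ?_
  rcases (monotone_pow4Floor (by linarith : a / 2 ≤ b / 2)).eq_or_lt with h | h
  · rw [h]
    exact max_le_max le_rfl (by linarith)
  · calc _ ≤ 4 * pow4Floor (a / 2) := max_le (by linarith [one_le_pow4Floor (a / 2)])
          (by linarith [lt_four_mul_pow4Floor (a / 2)])
      _ ≤ pow4Floor (b / 2) := four_mul_pow4Floor_le h
      _ ≤ _ := le_max_left _ _

lemma monotone_stairSnd : Monotone stairSnd := by
  intro a b hab
  rw [stairSnd_eq, stairSnd_eq]
  refine max_le_max (by linarith) ?_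
  rcases (monotone_pow4Floor (by linarith : a / 2 ≤ b / 2)).eq_or_lt with h | h
  · rw [h]
    exact min_le_min (by linarith) le_rfl
  · have ha := one_le_pow4Floor (a / 2)
    have hb : pow4Floor (b / 2) ≤ b / 2 :=
      (le_max_iff.mp (pow4Floor_le_max _)).resolve_right (by linarith)
    calc _ ≤ 4 * pow4Floor (a / 2) := min_le_right _ _
      _ ≤ pow4Floor (b / 2) := four_mul_pow4Floor_le h
      _ ≤ _ := le_min (by linarith) (by linarith)

lemma stairFst_nonneg {s : ℝ} (hs : 0 ≤ s) : 0 ≤ stairFst s :=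
  le_min (by linarith) (le_max_of_le_left (by linarith [one_le_pow4Floor (s / 2)]))

lemma stairSnd_nonneg {s : ℝ} (hs : 0 ≤ s) : 0 ≤ stairSnd s := by
  rw [stairSnd_eq]
  exact le_max_of_le_left (by linarith)

lemma stairFst_zero : stairFst 0 = 0 := by
  rw [stairFst, zero_div]
  exact min_eq_left (le_max_of_le_left (by linarith [one_le_pow4Floor 0]))

lemma stairSnd_zero : stairSnd 0 = 0 := by
  rw [stairSnd, stairFst_zero, sub_zero]

lemma stairFst_vertical (k : ℕ) {c : ℝ} (hc0 : 0 ≤ c) (hc : c ≤ 4 ^ k) :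
    stairFst (2 * 4 ^ k + c) = 4 ^ k := by
  have ha : (0 : ℝ) < 4 ^ k := by positivity
  have hp : pow4Floor ((2 * 4 ^ k + c) / 2) = 4 ^ k := by
    rw [show (2 * 4 ^ k + c) / 2 = 4 ^ k + c / 2 by ring]
    exact pow4Floor_pow_add k (by linarith) (by linarith)
  rw [stairFst, hp, max_eq_left (by linarith), min_eq_right (by linarith)]

lemma stairFst_horizontal (k : ℕ) {c : ℝ} (hc0 : 0 ≤ c) (hc : c ≤ 4 ^ k) :
    stairFst (5 * 4 ^ k + c) = 4 ^ k + c := by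
  have ha : (0 : ℝ) < 4 ^ k := by positivity
  have hp : pow4Floor ((5 * 4 ^ k + c) / 2) = 4 ^ k := by
    rw [show (5 * 4 ^ k + c) / 2 = 4 ^ k + (3 * 4 ^ k + c) / 2 by ring]
    exact pow4Floor_pow_add k (by linarith) (by linarith)
  rw [stairFst, hp, max_eq_right (by linarith), min_eq_right (by linarith)]
  ring

noncomputable def oddExt (φ : ℝ → ℝ) (s : ℝ) : ℝ := if 0 ≤ s then φ s else -φ (-s)

section OddExt

variable {φ : ℝ → ℝ}

lemma oddExt_of_nonneg {s : ℝ} (hs : 0 ≤ s) : oddExt φ s = φ s := if_pos hs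

lemma oddExt_neg (h0 : φ 0 = 0) (s : ℝ) : oddExt φ (-s) = -oddExt φ s := by
  unfold oddExt
  split_ifs with h1 h2 h2
  · rw [le_antisymm (neg_nonneg.mp h1) h2, neg_zero, h0, neg_zero]
  · rw [neg_neg]
  · rw [neg_neg]
  · exact absurd (neg_nonneg.mpr (not_le.mp h2).le) h1

lemma monotone_oddExt (h0 : φ 0 = 0) (hφ : MonotoneOn φ (Ici 0)) : Monotone (oddExt φ) :=
  monotone_of_odd_of_monotoneOn_nonneg (oddExt_neg h0) fun a ha b hb hab => by
    rw [oddExt_of_nonneg ha, oddExt_of_nonneg hb]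
    exact hφ ha hb hab

lemma abs_oddExt (hφ : ∀ s, 0 ≤ s → 0 ≤ φ s) (s : ℝ) : |oddExt φ s| = φ |s| := by
  unfold oddExt
  split_ifs with h
  · rw [abs_of_nonneg (hφ s h), abs_of_nonneg h]
  · rw [abs_neg, abs_of_neg (not_le.mp h), abs_of_nonneg (hφ _ (by linarith))]

end OddExt

noncomputable def curveX : ℝ → ℝ := oddExt stairFst

noncomputable def curveY : ℝ → ℝ := oddExt stairSnd

lemma monotone_curveX : Monotone curveX :=
  monotone_oddExt stairFst_zero (monotone_stairFst.monotoneOn _)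

lemma monotone_curveY : Monotone curveY :=
  monotone_oddExt stairSnd_zero (monotone_stairSnd.monotoneOn _)

lemma abs_curveX_add_abs_curveY (s : ℝ) : |curveX s| + |curveY s| = |s| := by
  rw [curveX, curveY, abs_oddExt (fun _ => stairFst_nonneg),
    abs_oddExt (fun _ => stairSnd_nonneg), stairSnd, add_sub_cancel]

lemma abs_curveX_le (s : ℝ) : |curveX s| ≤ |s| := by
  linarith [abs_curveX_add_abs_curveY s, abs_nonneg (curveY s)]

lemma abs_curveY_le (s : ℝ) : |curveY s| ≤ |s| := by
  linarith [abs_curveX_add_abs_curveY s, abs_nonneg (curveX s)]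

lemma euclNorm_curve_le (s : ℝ) : euclNorm (curveX s, curveY s) ≤ |s| :=
  (euclNorm_le_abs_add_abs _ _).trans (abs_curveX_add_abs_curveY s).le

lemma curve_vertical (k : ℕ) {c : ℝ} (hc0 : 0 ≤ c) (hc : c ≤ 4 ^ k) :
    curveX (2 * 4 ^ k + c) = 4 ^ k ∧ curveY (2 * 4 ^ k + c) = 4 ^ k + c := by
  have hs : (0 : ℝ) ≤ 2 * 4 ^ k + c := by positivity
  rw [curveX, curveY, oddExt_of_nonneg hs, oddExt_of_nonneg hs, stairSnd,
    stairFst_vertical k hc0 hc]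
  constructor <;> ring

lemma curve_horizontal (k : ℕ) {c : ℝ} (hc0 : 0 ≤ c) (hc : c ≤ 4 ^ k) :
    curveX (5 * 4 ^ k + c) = 4 ^ k + c ∧ curveY (5 * 4 ^ k + c) = 4 * 4 ^ k := by
  have hs : (0 : ℝ) ≤ 5 * 4 ^ k + c := by positivity
  rw [curveX, curveY, oddExt_of_nonneg hs, oddExt_of_nonneg hs, stairSnd,
    stairFst_horizontal k hc0 hc]
  constructor <;> ring

lemma curveX_neg (s : ℝ) : curveX (-s) = -curveX s := oddExt_neg stairFst_zero s

lemma curveY_neg (s : ℝ) : curveY (-s) = -curveY s := oddExt_neg stairSnd_zero s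

noncomputable def scale (r : ℝ) : ℝ := 4 * pow4Floor (4 * r)

lemma four_mul_lt_scale (r : ℝ) : 4 * r < scale r := lt_four_mul_pow4Floor _

lemma scale_le (r : ℝ) : scale r ≤ 16 * max r 1 := by
  have := pow4Floor_le_max (4 * r)
  have : max (4 * r) 1 ≤ 4 * max r 1 :=
    max_le (by linarith [le_max_left r 1]) (by linarith [le_max_right r 1])
  rw [scale]
  linarith

lemma scale_pos (r : ℝ) : 0 < scale r := by
  rw [scale]
  linarith [one_le_pow4Floor (4 * r)]

lemma exists_scale_eq_pow (r : ℝ) : ∃ k : ℕ, scale r = 4 ^ k := ⟨_, (pow_succ' _ _).symm⟩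

lemma monotone_scale : Monotone scale := fun _ _ h =>
  mul_le_mul_of_nonneg_left (monotone_pow4Floor (by linarith)) (by norm_num)

/-- Four parameters at which the curve averages to `(x, y)`: two on the vertical segments
`x = ± a`, two on the horizontal segments `y = ± 4 a`, with `a = scale ‖(x, y)‖`. -/
noncomputable def curveParam (x y : ℝ) : Fin 4 → ℝ :=
  let a := scale (euclNorm (x, y))
  ![2 * a + (4 * y)⁺, -(2 * a + (4 * y)⁻), 5 * a + (4 * x)⁺, -(5 * a + (4 * x)⁻)]

lemma abs_four_mul_le_scale (x y : ℝ) :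
    |4 * x| ≤ scale (euclNorm (x, y)) ∧ |4 * y| ≤ scale (euclNorm (x, y)) := by
  have := four_mul_lt_scale (euclNorm (x, y))
  simp only [abs_mul, abs_of_pos (four_pos : (0 : ℝ) < 4)]
  constructor <;> linarith [abs_fst_le_euclNorm x y, abs_snd_le_euclNorm x y]

lemma posPart_le_of_abs_le {t a : ℝ} (h : |t| ≤ a) : t⁺ ≤ a := by
  linarith [posPart_add_negPart t, negPart_nonneg t]

lemma negPart_le_of_abs_le {t a : ℝ} (h : |t| ≤ a) : t⁻ ≤ a := by
  linarith [posPart_add_negPart t, posPart_nonneg t]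

lemma sum_curveX_curveParam (x y : ℝ) : ∑ i, curveX (curveParam x y i) = 4 * x := by
  obtain ⟨k, hk⟩ := exists_scale_eq_pow (euclNorm (x, y))
  obtain ⟨hx, hy⟩ := abs_four_mul_le_scale x y
  rw [hk] at hx hy
  simp only [Fin.sum_univ_four, curveParam, hk, Matrix.cons_val, curveX_neg,
    (curve_vertical k (posPart_nonneg _) (posPart_le_of_abs_le hy)).1,
    (curve_vertical k (negPart_nonneg _) (negPart_le_of_abs_le hy)).1,
    (curve_horizontal k (posPart_nonneg _) (posPart_le_of_abs_le hx)).1,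
    (curve_horizontal k (negPart_nonneg _) (negPart_le_of_abs_le hx)).1]
  linarith [posPart_sub_negPart (4 * x)]

lemma sum_curveY_curveParam (x y : ℝ) : ∑ i, curveY (curveParam x y i) = 4 * y := by
  obtain ⟨k, hk⟩ := exists_scale_eq_pow (euclNorm (x, y))
  obtain ⟨hx, hy⟩ := abs_four_mul_le_scale x y
  rw [hk] at hx hy
  simp only [Fin.sum_univ_four, curveParam, hk, Matrix.cons_val, curveY_neg,
    (curve_vertical k (posPart_nonneg _) (posPart_le_of_abs_le hy)).2,
    (curve_vertical k (negPart_nonneg _) (negPart_le_of_abs_le hy)).2,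
    (curve_horizontal k (posPart_nonneg _) (posPart_le_of_abs_le hx)).2,
    (curve_horizontal k (negPart_nonneg _) (negPart_le_of_abs_le hx)).2]
  linarith [posPart_sub_negPart (4 * y)]

lemma abs_curveParam_le (x y : ℝ) (i : Fin 4) :
    |curveParam x y i| ≤ 96 * max (euclNorm (x, y)) 1 := by
  have ha := scale_le (euclNorm (x, y))
  have ha0 := scale_pos (euclNorm (x, y))
  obtain ⟨hx, hy⟩ := abs_four_mul_le_scale x y
  have := posPart_le_of_abs_le hx
  have := negPart_le_of_abs_le hx
  have := posPart_le_of_abs_le hy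
  have := negPart_le_of_abs_le hy
  fin_cases i <;>
  simp only [curveParam, Fin.isValue, Fin.zero_eta, Fin.mk_one, Fin.reduceFinMk,
    Matrix.cons_val, abs_neg] <;>
  rw [abs_of_nonneg (by positivity)] <;> linarith

lemma measurable_curveParam (i : Fin 4) :
    Measurable fun p : ℝ × ℝ => curveParam p.1 p.2 i := by
  have : Measurable fun p : ℝ × ℝ => scale (euclNorm p) :=
    monotone_scale.measurable.comp (by unfold euclNorm; fun_prop)
  fin_cases i <;>
  simp only [curveParam, Fin.isValue, Fin.zero_eta, Fin.mk_one, Fin.reduceFinMk,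
    Matrix.cons_val, Prod.mk.eta] <;>
  fun_prop

lemma Measurable.curveParam {α : Type*} {mα : MeasurableSpace α} {x y : α → ℝ}
    {j : α → Fin 4} (hx : Measurable x) (hy : Measurable y) (hj : Measurable j) :
    Measurable fun a => curveParam (x a) (y a) (j a) := by
  have := (measurable_from_prod_countable_left
    (f := fun p : (ℝ × ℝ) × Fin 4 => _root_.curveParam p.1.1 p.1.2 p.2)
    measurable_curveParam).comp ((hx.prodMk hy).prodMk hj)
  simpa only [Function.comp_def] using this

section Exhaustion

variable {α : Type*} [MeasurableSpace α] {μ : Measure α} [IsFiniteMeasure μ] {𝒜 : Set (Set α)}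

lemma exists_mem_superset_measure_sdiff_le_two_mul {B : Set α} (hB : B ∈ 𝒜) :
    ∃ B' ∈ 𝒜, B ⊆ B' ∧ ∀ E ∈ 𝒜, B ⊆ E → μ (E \ B) ≤ 2 * μ (B' \ B) := by
  set g := ⨆ E ∈ 𝒜, ⨆ _ : B ⊆ E, μ (E \ B)
  have hle : ∀ E ∈ 𝒜, B ⊆ E → μ (E \ B) ≤ g := fun E hE hBE =>
    le_iSup₂_of_le E hE (le_iSup_of_le hBE le_rfl)
  rcases eq_or_ne g 0 with hg | hg
  · exact ⟨B, hB, subset_rfl, fun E hE hBE => (hle E hE hBE).trans (by simp [hg])⟩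
  have hg_top : g ≠ ⊤ := ne_top_of_le_ne_top (measure_ne_top μ univ)
    (iSup₂_le fun E _ => iSup_le fun _ => measure_mono (subset_univ _))
  have hhalf := ENNReal.half_lt_self hg hg_top
  simp only [g, lt_iSup_iff] at hhalf
  obtain ⟨E', hE', hBE', hlt⟩ := hhalf
  refine ⟨E', hE', hBE', fun E hE hBE => (hle E hE hBE).trans ?_⟩
  rw [mul_comm]
  exact (ENNReal.div_le_iff_le_mul (.inl two_ne_zero) (.inl ENNReal.ofNat_ne_top)).mp hlt.le

/-- The maximal set is built greedily: each step captures at least half of the largest possible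
gain, and the gains are summable. -/
lemma exists_maximal_ae_of_iUnion_mem (h_empty : ∅ ∈ 𝒜) (h_meas : ∀ B ∈ 𝒜, MeasurableSet B)
    (h_iUnion : ∀ B : ℕ → Set α, Monotone B → (∀ n, B n ∈ 𝒜) → ⋃ n, B n ∈ 𝒜) :
    ∃ M ∈ 𝒜, ∀ E ∈ 𝒜, M ⊆ E → μ (E \ M) = 0 := by
  choose! next hnext_mem hnext_sub hnext_le using
    fun B (hB : B ∈ 𝒜) => exists_mem_superset_measure_sdiff_le_two_mul (μ := μ) hB
  set B : ℕ → Set α := fun n => next^[n] ∅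
  have hB_succ : ∀ n, B (n + 1) = next (B n) := fun n => Function.iterate_succ_apply' _ _ _
  have hB_mem : ∀ n, B n ∈ 𝒜 := fun n => by
    induction n with
    | zero => exact h_empty
    | succ n ih => rw [hB_succ]; exact hnext_mem _ ih
  have hB_mono : Monotone B := monotone_nat_of_le_succ fun n => by
    rw [hB_succ]; exact hnext_sub _ (hB_mem n)
  have hlim : Tendsto (fun n => μ (B (n + 1) \ B n)) atTop (𝓝 0) := by
    have hsum : ∑' n, μ (disjointed B n) ≠ ⊤ := by
      rw [← measure_iUnion (disjoint_disjointed B)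
        (MeasurableSet.disjointed fun n => h_meas _ (hB_mem n))]
      exact measure_ne_top μ _
    have := (tendsto_add_atTop_iff_nat 1).mpr (ENNReal.tendsto_atTop_zero_of_tsum_ne_top hsum)
    simpa only [← Order.succ_eq_add_one, hB_mono.disjointed_succ (not_isMax _)] using this
  refine ⟨⋃ n, B n, h_iUnion B hB_mono hB_mem, fun E hE hME => ?_⟩
  have hlim2 : Tendsto (fun n => 2 * μ (B (n + 1) \ B n)) atTop (𝓝 0) := by
    simpa using ENNReal.Tendsto.const_mul hlim (.inr ENNReal.ofNat_ne_top)
  refine le_antisymm (ge_of_tendsto' hlim2 fun n => ?_) bot_le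
  calc μ (E \ ⋃ n, B n) ≤ μ (E \ B n) :=
        measure_mono (sdiff_subset_sdiff_right (subset_iUnion B n))
    _ ≤ 2 * μ (next (B n) \ B n) :=
      hnext_le _ (hB_mem n) E hE ((subset_iUnion B n).trans hME)
    _ = 2 * μ (B (n + 1) \ B n) := by rw [hB_succ]

end Exhaustion

lemma ae_nonpos_of_ae_le_of_tendsto_integral {α : Type*} [MeasurableSpace α] {μ : Measure α}
    {f : α → ℝ} {g : ℕ → α → ℝ} (hf : AEStronglyMeasurable f μ) (hg : ∀ n, Integrable (g n) μ)
    (hg0 : ∀ n, 0 ≤ᵐ[μ] g n) (hfg : ∀ n, f ≤ᵐ[μ] g n)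
    (hlim : Tendsto (fun n => ∫ x, g n x ∂μ) atTop (𝓝 0)) : f ≤ᵐ[μ] 0 := by
  have hpos : ∀ n, (fun x => max (f x) 0) ≤ᵐ[μ] g n := fun n => by
    filter_upwards [hfg n, hg0 n] with x h1 h2 using max_le h1 h2
  have hint : Integrable (fun x => max (f x) 0) μ :=
    (hg 0).mono' (hf.sup aestronglyMeasurable_const) <| by
      filter_upwards [hpos 0] with x h
      rwa [Real.norm_of_nonneg (le_max_right _ _)]
  have hzero : ∫ x, max (f x) 0 ∂μ = 0 :=
    le_antisymm (ge_of_tendsto' hlim fun n => integral_mono_ae hint (hg n) (hpos n))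
      (integral_nonneg fun x => le_max_right _ _)
  filter_upwards [(integral_eq_zero_iff_of_nonneg (fun x => le_max_right _ _) hint).mp hzero]
    with x hx
  exact max_eq_right_iff.mp hx

lemma exists_measure_add_one_div_pow_le_ne_zero {α : Type*} [MeasurableSpace α]
    {μ : Measure α} {f g : α → ℝ} (h : ¬ g ≤ᵐ[μ] f) :
    ∃ n : ℕ, μ {x | f x + 1 / 2 ^ n ≤ g x} ≠ 0 := by
  by_contra! hnull
  refine h ?_
  filter_upwards [ae_all_iff.mpr fun n => measure_eq_zero_iff_ae_notMem.mp (hnull n)] with x hx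
  by_contra! hlt
  obtain ⟨n, hn⟩ := exists_pow_lt_of_lt_one (sub_pos.mpr hlt) one_half_lt_one
  exact hx n (by simp only [one_div, inv_pow] at hn ⊢; linarith)

section CondIndicator

variable {Ω : Type*} {m : MeasurableSpace Ω} [mΩ : MeasurableSpace Ω] {μ : Measure Ω}
  {A B M S W : Set Ω}

lemma condIndicator_nonneg (A : Set Ω) : 0 ≤ᵐ[μ] condIndicator m μ A :=
  condExp_nonneg <| .of_forall <| indicator_nonneg fun _ _ => zero_le_one

lemma stronglyMeasurable_condIndicator (A : Set Ω) :
    StronglyMeasurable[m] (condIndicator m μ A) :=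
  stronglyMeasurable_condExp

lemma condIndicator_ae_eq_zero (hA : μ A = 0) : condIndicator m μ A =ᵐ[μ] 0 :=
  (condExp_congr_ae (indicator_meas_zero hA)).trans (by rw [condExp_zero])

variable [IsFiniteMeasure μ]

lemma condIndicator_mono (hA : MeasurableSet A) (hB : MeasurableSet B) (hAB : A ⊆ B) :
    condIndicator m μ A ≤ᵐ[μ] condIndicator m μ B :=
  condExp_mono ((integrable_const 1).indicator hA) ((integrable_const 1).indicator hB)
    (.of_forall (indicator_le_indicator_of_subset hAB fun _ => zero_le_one))

lemma condIndicator_union (hA : MeasurableSet A) (hB : MeasurableSet B) (hAB : Disjoint A B) :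
    condIndicator m μ (A ∪ B) =ᵐ[μ] condIndicator m μ A + condIndicator m μ B := by
  rw [condIndicator, indicator_union_of_disjoint hAB]
  exact condExp_add ((integrable_const 1).indicator hA) ((integrable_const 1).indicator hB) m

lemma condIndicator_diff (hA : MeasurableSet A) (hB : MeasurableSet B) (hBA : B ⊆ A) :
    condIndicator m μ (A \ B) =ᵐ[μ] condIndicator m μ A - condIndicator m μ B := by
  filter_upwards [condIndicator_union (m := m) (μ := μ) hB (hA.diff hB) disjoint_sdiff_right]
    with ω h
  rw [union_sdiff_cancel hBA] at h
  simp [h]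

lemma condIndicator_inter (hS : MeasurableSet[m] S) (hA : MeasurableSet A) :
    condIndicator m μ (S ∩ A) =ᵐ[μ] S.indicator (condIndicator m μ A) := by
  rw [condIndicator, ← indicator_indicator]
  exact condExp_indicator ((integrable_const 1).indicator hA) hS

lemma integral_condIndicator (hm : m ≤ mΩ) (hA : MeasurableSet A) :
    ∫ ω, condIndicator m μ A ω ∂μ = μ.real A := by
  rw [condIndicator, integral_condExp hm, integral_indicator_const _ hA, smul_eq_mul, mul_one]

lemma condIndicator_iUnion_le (hm : m ≤ mΩ) {B : ℕ → Set Ω} (hB : Monotone B)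
    (hBm : ∀ n, MeasurableSet (B n)) {h : Ω → ℝ} (hh : AEStronglyMeasurable h μ)
    (hle : ∀ n, condIndicator m μ (B n) ≤ᵐ[μ] h) :
    condIndicator m μ (⋃ n, B n) ≤ᵐ[μ] h := by
  have hU : MeasurableSet (⋃ n, B n) := .iUnion hBm
  have hlim :
      Tendsto (fun n => ∫ ω, condIndicator m μ ((⋃ n, B n) \ B n) ω ∂μ) atTop (𝓝 0) := by
    simp_rw [integral_condIndicator hm (hU.diff (hBm _)), measureReal_def]
    have h := tendsto_measure_iInter_atTop (μ := μ)
      (fun n => (hU.diff (hBm n)).nullMeasurableSet)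
      (fun _ _ hij => sdiff_subset_sdiff_right (hB hij)) ⟨0, measure_ne_top μ _⟩
    rw [← sdiff_iUnion, sdiff_self, measure_empty] at h
    exact (ENNReal.tendsto_toReal ENNReal.zero_ne_top).comp h
  have := ae_nonpos_of_ae_le_of_tendsto_integral (f := condIndicator m μ (⋃ n, B n) - h)
    (g := fun n => condIndicator m μ ((⋃ n, B n) \ B n))
    (((stronglyMeasurable_condIndicator _).mono hm).aestronglyMeasurable.sub hh)
    (fun n => integrable_condExp) (fun n => condIndicator_nonneg _) (fun n => by
      filter_upwards [condIndicator_diff (m := m) hU (hBm n) (subset_iUnion B n), hle n]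
        with ω h1 h2
      simp only [Pi.sub_apply] at h1 ⊢
      rw [h1]
      linarith) hlim
  filter_upwards [this] with ω h
  simpa [sub_nonpos] using h

lemma condExp_indicator_eq_mul_condIndicator (hS : MeasurableSet S) {X : Ω → ℝ}
    (hX : StronglyMeasurable[m] X) (hXi : Integrable X μ) :
    μ[S.indicator X | m] =ᵐ[μ] X * condIndicator m μ S := by
  have h : S.indicator X = X * S.indicator fun _ => 1 := by
    ext ω
    by_cases hω : ω ∈ S <;> simp [hω]
  rw [h]
  exact condExp_mul_of_stronglyMeasurable_left hX (h ▸ hXi.indicator hS)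
    ((integrable_const 1).indicator hS)

lemma condExp_comp_index {ι : Type*} [Fintype ι] [MeasurableSpace ι]
    [MeasurableSingletonClass ι] {J : Ω → ι} (hJ : Measurable J) {X : ι → Ω → ℝ}
    (hX : ∀ i, StronglyMeasurable[m] (X i)) (hXi : ∀ i, Integrable (X i) μ) :
    μ[fun ω => X (J ω) ω | m] =ᵐ[μ]
      fun ω => ∑ i, condIndicator m μ {ω | J ω = i} ω * X i ω := by
  have hJi : ∀ i, MeasurableSet {ω | J ω = i} := fun i => hJ (measurableSet_singleton i)
  have h : (fun ω => X (J ω) ω) = ∑ i, {ω | J ω = i}.indicator (X i) := by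
    ext ω
    classical
    simp [indicator_apply]
  rw [h]
  filter_upwards [condExp_finsetSum (s := Finset.univ) (fun i _ => (hXi i).indicator (hJi i)) m,
    ae_all_iff.mpr fun i =>
      condExp_indicator_eq_mul_condIndicator (m := m) (hJi i) (hX i) (hXi i)] with ω h1 h2
  rw [h1, Finset.sum_apply]
  simp only [h2, Pi.mul_apply, mul_comm]

lemma condIndicator_univ (hm : m ≤ mΩ) : condIndicator m μ univ = 1 := by
  rw [condIndicator, indicator_univ]
  exact condExp_const hm 1

lemma condIndicator_le_one (hm : m ≤ mΩ) (hA : MeasurableSet A) :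
    condIndicator m μ A ≤ᵐ[μ] 1 := by
  rw [← condIndicator_univ (μ := μ) hm]
  exact condIndicator_mono hA .univ (subset_univ A)

section Atomless

variable (hm : m ≤ mΩ) (hCA : CondAtomless m μ)
include hm hCA

lemma exists_subset_condIndicator_le_half (hW : MeasurableSet W) :
    ∃ E ⊆ W, MeasurableSet E ∧
      (∀ᵐ ω ∂μ, condIndicator m μ E ω ≤ condIndicator m μ W ω / 2) ∧
      ∀ᵐ ω ∂μ, 0 < condIndicator m μ W ω → 0 < condIndicator m μ E ω := by
  obtain ⟨B, hB, hBW, hBpos⟩ := hCA W hW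
  set T := {ω | condIndicator m μ B ω ≤ condIndicator m μ W ω / 2}
  have hT : MeasurableSet[m] T := measurableSet_le
    (stronglyMeasurable_condIndicator B).measurable
    ((stronglyMeasurable_condIndicator W).measurable.div_const 2)
  -- keep `B` where it carries at most half of the conditional mass of `W`, and `W \ B` elsewhere
  have hE := condIndicator_union (m := m) (μ := μ) ((hm _ hT).inter hB)
    ((hm _ hT).compl.inter (hW.diff hB))
    (disjoint_compl_right.mono inter_subset_left inter_subset_left)
  have hEval : ∀ᵐ ω ∂μ, condIndicator m μ ((T ∩ B) ∪ (Tᶜ ∩ (W \ B))) ω =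
      if ω ∈ T then condIndicator m μ B ω
      else condIndicator m μ W ω - condIndicator m μ B ω := by
    filter_upwards [hE, condIndicator_inter hT hB, condIndicator_inter hT.compl (hW.diff hB),
      condIndicator_diff (m := m) hW hB hBW] with ω h1 h2 h3 h4
    by_cases hω : ω ∈ T <;> simp [h1, h2, h3, h4, hω]
  refine ⟨(T ∩ B) ∪ (Tᶜ ∩ (W \ B)), union_subset (inter_subset_right.trans hBW)
    (inter_subset_right.trans sdiff_subset), ((hm _ hT).inter hB).union
    ((hm _ hT).compl.inter (hW.diff hB)), ?_, ?_⟩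
  · filter_upwards [hEval] with ω h
    rw [h]
    split_ifs with hω
    · exact hω
    · simp only [T, mem_ofPred_eq, not_le] at hω
      linarith
  · filter_upwards [hEval, hBpos] with ω h1 h2 hWpos
    obtain ⟨h3, h4⟩ := h2 hWpos
    rw [h1]
    split_ifs <;> linarith

lemma exists_subset_condIndicator_le_div_pow (hW : MeasurableSet W) (n : ℕ) :
    ∃ E ⊆ W, MeasurableSet E ∧
      (∀ᵐ ω ∂μ, condIndicator m μ E ω ≤ condIndicator m μ W ω / 2 ^ n) ∧
      ∀ᵐ ω ∂μ, 0 < condIndicator m μ W ω → 0 < condIndicator m μ E ω := by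
  induction n with
  | zero => exact ⟨W, subset_rfl, hW, .of_forall fun ω => by simp, .of_forall fun ω h => h⟩
  | succ n ih =>
    obtain ⟨E, hEW, hE, hEle, hEpos⟩ := ih
    obtain ⟨E', hE'E, hE', hE'le, hE'pos⟩ := exists_subset_condIndicator_le_half hm hCA hE
    refine ⟨E', hE'E.trans hEW, hE', ?_, ?_⟩
    · filter_upwards [hEle, hE'le] with ω h1 h2
      rw [pow_succ, ← div_div]
      linarith
    · filter_upwards [hEpos, hE'pos] with ω h1 h2 hW using h2 (h1 hW)

lemma exists_nonnull_condIndicator_union_le (hA : MeasurableSet A) (hM : MeasurableSet M)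
    (hMA : M ⊆ A) {h : Ω → ℝ} (hh : StronglyMeasurable[m] h) (hMh : condIndicator m μ M ≤ᵐ[μ] h)
    (hhA : h ≤ᵐ[μ] condIndicator m μ A) (hlt : ¬ h ≤ᵐ[μ] condIndicator m μ M) :
    ∃ E ⊆ A \ M, MeasurableSet E ∧ μ E ≠ 0 ∧ condIndicator m μ (M ∪ E) ≤ᵐ[μ] h := by
  obtain ⟨n, hS⟩ := exists_measure_add_one_div_pow_le_ne_zero hlt
  set S := {ω | condIndicator m μ M ω + 1 / 2 ^ n ≤ h ω}
  have hSm : MeasurableSet[m] S :=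
    measurableSet_le ((stronglyMeasurable_condIndicator M).measurable.add_const _) hh.measurable
  obtain ⟨E, hEW, hE, hEle, hEpos⟩ :=
    exists_subset_condIndicator_le_div_pow hm hCA ((hm _ hSm).inter (hA.diff hM)) n
  have hEAM : E ⊆ A \ M := hEW.trans inter_subset_right
  have hW := condIndicator_inter (μ := μ) hSm (hA.diff hM)
  have hAM := condIndicator_diff (m := m) (μ := μ) hA hM hMA
  have hpow : (0 : ℝ) < 1 / 2 ^ n := by positivity
  refine ⟨E, hEAM, hE, fun hE0 => hS ?_, ?_⟩
  · -- on `S` the set `S ∩ (A \ M)` has positive conditional mass, hence so does `E`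
    rw [measure_eq_zero_iff_ae_notMem]
    filter_upwards [hW, hAM, hEpos, condIndicator_ae_eq_zero (m := m) hE0, hhA]
      with ω h1 h2 h3 h4 h5 hωS
    have hωS' : condIndicator m μ M ω + 1 / 2 ^ n ≤ h ω := hωS
    have : 0 < condIndicator m μ (S ∩ (A \ M)) ω := by
      rw [h1, indicator_of_mem hωS, h2, Pi.sub_apply]
      linarith
    simpa [h4] using h3 this
  · filter_upwards [condIndicator_union (m := m) (μ := μ) hM hE
      (disjoint_sdiff_right.mono_right hEAM), hEle, hW, condIndicator_le_one hm (hA.diff hM),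
      hMh] with ω h1 h2 h3 h4 h5
    rw [h1, Pi.add_apply]
    by_cases hωS : ω ∈ S
    · have hωS' : condIndicator m μ M ω + 1 / 2 ^ n ≤ h ω := hωS
      rw [h3, indicator_of_mem hωS] at h2
      have : condIndicator m μ (A \ M) ω / 2 ^ n ≤ 1 / 2 ^ n := by gcongr; exact h4
      linarith
    · rw [h3, indicator_of_notMem hωS, zero_div] at h2
      linarith

theorem exists_subset_condIndicator_eq (hA : MeasurableSet A) {h : Ω → ℝ}
    (hh : StronglyMeasurable[m] h) (h0 : 0 ≤ᵐ[μ] h) (hhA : h ≤ᵐ[μ] condIndicator m μ A) :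
    ∃ M ⊆ A, MeasurableSet M ∧ condIndicator m μ M =ᵐ[μ] h := by
  obtain ⟨M, ⟨hM, hMA, hMh⟩, hmax⟩ := exists_maximal_ae_of_iUnion_mem (μ := μ)
    (𝒜 := {B | MeasurableSet B ∧ B ⊆ A ∧ condIndicator m μ B ≤ᵐ[μ] h})
    ⟨.empty, empty_subset A, (condIndicator_ae_eq_zero measure_empty).le.trans h0⟩
    (fun B hB => hB.1)
    (fun B hB hBA => ⟨.iUnion fun n => (hBA n).1, iUnion_subset fun n => (hBA n).2.1,
      condIndicator_iUnion_le hm hB (fun n => (hBA n).1) (hh.mono hm).aestronglyMeasurable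
        fun n => (hBA n).2.2⟩)
  refine ⟨M, hMA, hM, hMh.antisymm ?_⟩
  by_contra hlt
  obtain ⟨E, hEAM, hE, hE0, hME⟩ :=
    exists_nonnull_condIndicator_union_le hm hCA hA hM hMA hh hMh hhA hlt
  refine hE0 ?_
  have := hmax (M ∪ E) ⟨hM.union hE, union_subset hMA (hEAM.trans sdiff_subset), hME⟩
    subset_union_left
  rwa [union_sdiff_left, sdiff_eq_left.mpr (disjoint_sdiff_right.mono_right hEAM).symm] at this

lemma exists_subset_condIndicator_eq_half (hA : MeasurableSet A) :
    ∃ M ⊆ A, MeasurableSet M ∧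
      condIndicator m μ M =ᵐ[μ] (fun ω => condIndicator m μ A ω / 2) ∧
      condIndicator m μ (A \ M) =ᵐ[μ] fun ω => condIndicator m μ A ω / 2 := by
  obtain ⟨M, hMA, hM, hMh⟩ := exists_subset_condIndicator_eq hm hCA hA
    ((stronglyMeasurable_condIndicator (m := m) (μ := μ) A).measurable.div_const 2
      ).stronglyMeasurable
    (by filter_upwards [condIndicator_nonneg (m := m) A] with ω h using div_nonneg h zero_le_two)
    (by filter_upwards [condIndicator_nonneg (m := m) A] with ω h using half_le_self h)
  refine ⟨M, hMA, hM, hMh, ?_⟩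
  filter_upwards [condIndicator_diff (m := m) (μ := μ) hA hM hMA, hMh] with ω h1 h2
  rw [h1, Pi.sub_apply, h2]
  ring

theorem exists_index_condIndicator_eq_quarter :
    ∃ J : Ω → Fin 4, Measurable J ∧
      ∀ i, condIndicator m μ {ω | J ω = i} =ᵐ[μ] fun _ => 1 / 4 := by
  obtain ⟨H, -, hH, hH1, hH2⟩ := exists_subset_condIndicator_eq_half hm hCA .univ
  obtain ⟨H₁, hH₁H, hH₁, h11, h12⟩ := exists_subset_condIndicator_eq_half hm hCA hH
  obtain ⟨H₂, hH₂H, hH₂, h21, h22⟩ :=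
    exists_subset_condIndicator_eq_half hm hCA (MeasurableSet.univ.diff hH)
  have quarter : ∀ {C D : Set Ω},
      condIndicator m μ D =ᵐ[μ] (fun ω => condIndicator m μ univ ω / 2) →
      condIndicator m μ C =ᵐ[μ] (fun ω => condIndicator m μ D ω / 2) →
      condIndicator m μ C =ᵐ[μ] fun _ => 1 / 4 := fun hD hC => by
    filter_upwards [hD, hC] with ω h1 h2
    rw [h2, h1, condIndicator_univ hm]
    norm_num
  classical
  refine ⟨fun ω => if ω ∈ H then (if ω ∈ H₁ then 0 else 1) else (if ω ∈ H₂ then 2 else 3),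
    Measurable.ite hH (Measurable.ite hH₁ measurable_const measurable_const)
      (Measurable.ite hH₂ measurable_const measurable_const), fun i => ?_⟩
  fin_cases i <;>
  [convert quarter hH1 h11 using 3; convert quarter hH1 h12 using 3;
    convert quarter hH2 h21 using 3; convert quarter hH2 h22 using 3] <;>
  ext ω <;> have := @hH₁H ω <;> have := @hH₂H ω <;>
  by_cases ω ∈ H <;> by_cases ω ∈ H₁ <;> by_cases ω ∈ H₂ <;> simp_all

end Atomless
end CondIndicator

lemma condExp_comp_curveParam {Ω : Type*} {m : MeasurableSpace Ω} [mΩ : MeasurableSpace Ω]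
    {μ : Measure Ω} [IsFiniteMeasure μ] (hm : m ≤ mΩ) {J : Ω → Fin 4} (hJ : Measurable J)
    (hJ4 : ∀ i, condIndicator m μ {ω | J ω = i} =ᵐ[μ] fun _ => 1 / 4) {T : ℝ → ℝ}
    (hT : Measurable T) (hTle : ∀ s, |T s| ≤ |s|) {f g : Ω → ℝ} (hf : Measurable[m] f)
    (hg : Measurable[m] g) (hfi : Integrable f μ) (hgi : Integrable g μ) :
    μ[fun ω => T (curveParam (f ω) (g ω) (J ω)) | m] =ᵐ[μ]
      fun ω => (∑ i, T (curveParam (f ω) (g ω) i)) / 4 := by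
  have hX : ∀ i, Measurable[m] fun ω => T (curveParam (f ω) (g ω) i) := fun i =>
    hT.comp (hf.curveParam hg measurable_const)
  have hXi : ∀ i, Integrable (fun ω => T (curveParam (f ω) (g ω) i)) μ := fun i =>
    (((hfi.abs.add hgi.abs).add (integrable_const 1)).const_mul 96).mono'
      ((hX i).mono hm le_rfl).aestronglyMeasurable <| .of_forall fun ω => by
        have : max (euclNorm (f ω, g ω)) 1 ≤ |f ω| + |g ω| + 1 :=
          max_le (by linarith [euclNorm_le_abs_add_abs (f ω) (g ω), abs_nonneg (f ω)])
            (by linarith [abs_nonneg (f ω), abs_nonneg (g ω)])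
        simp only [Real.norm_eq_abs, Pi.add_apply]
        linarith [hTle (curveParam (f ω) (g ω) i), abs_curveParam_le (f ω) (g ω) i]
  filter_upwards [condExp_comp_index hJ (fun i => (hX i).stronglyMeasurable) hXi,
    ae_all_iff.mpr hJ4] with ω h1 h2
  rw [h1, Finset.sum_div]
  exact Finset.sum_congr rfl fun i _ => by rw [h2]; ring

theorem commonotone_condexp_representation_with_bound :
    ∃ C : ℝ, 1 ≤ C ∧
      ∀ (Ω : Type) (m1 m2 : MeasurableSpace Ω), m1 ≤ m2 →
        ∀ (μ : @Measure Ω m2), @IsProbabilityMeasure Ω m2 μ →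
          @CondAtomless Ω m1 m2 μ →
          ∀ (f g : Ω → ℝ), Measurable[m1] f → Measurable[m1] g →
            Integrable f μ → Integrable g μ →
              ∃ ξ η : Ω → ℝ, Measurable[m2] ξ ∧ Measurable[m2] η ∧
                @Commonotone Ω m2 μ ξ η ∧
                condExp m1 μ ξ =ᵐ[μ] f ∧
                condExp m1 μ η =ᵐ[μ] g ∧
                ∀ᵐ ω ∂μ, euclNorm (ξ ω, η ω) ≤ C * max (euclNorm (f ω, g ω)) 1 := by
  refine ⟨96, by norm_num, fun Ω m1 m2 hm μ _ hCA f g hf hg hfi hgi => ?_⟩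
  obtain ⟨J, hJ, hJ4⟩ := exists_index_condIndicator_eq_quarter hm hCA
  let ζ : Ω → ℝ := fun ω => curveParam (f ω) (g ω) (J ω)
  have hζ : Measurable[m2] ζ := (hf.mono hm le_rfl).curveParam (hg.mono hm le_rfl) hJ
  refine ⟨curveX ∘ ζ, curveY ∘ ζ, monotone_curveX.measurable.comp hζ,
    monotone_curveY.measurable.comp hζ,
    ⟨curveX, curveY, ζ, monotone_curveX, monotone_curveY, hζ, .rfl, .rfl⟩, ?_, ?_,
    .of_forall fun ω => (euclNorm_curve_le (ζ ω)).trans (abs_curveParam_le _ _ _)⟩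
  · filter_upwards [condExp_comp_curveParam hm hJ hJ4 monotone_curveX.measurable abs_curveX_le
      hf hg hfi hgi] with ω h
    rw [Function.comp_def, h, sum_curveX_curveParam]
    ring
  · filter_upwards [condExp_comp_curveParam hm hJ hJ4 monotone_curveY.measurable abs_curveY_le
      hf hg hfi hgi] with ω h
    rw [Function.comp_def, h, sum_curveY_curveParam]
    ring
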